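/- In a monoidal category with an idempotent object (M, μ), for any forest T = (τ_1,...,τ_k) with n leaves and k roots and any forest S with n leaves and m roots, the assignment T ↦ μ_T = μ_{τ_1} ⊗ ... ⊗ μ_{τ_k} : M^{⊗n} → M^{⊗k} is functorial: μ of a composite (grafting) of forests equals the composite of the μ's, and μ of the identity forest is the identity. -/

import Mathlib

inductive BinTree : Type
  | leaf : BinTree
  | node : BinTree → BinTree → BinTree
deriving DecidableEq

/-- The number of leaves of a binary tree. -/
def BinTree.leaves : BinTree → ℕ
  | .leaf => 1
  | .node l r => l.leaves + r.leaves

/-- Graft trees onto the leaves of a tree (left to right), threading the list: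
returns the grafted tree together with the unused trees. -/
def BinTree.graftAux : BinTree → List BinTree → BinTree × List BinTree
  | .leaf, [] => (.leaf, [])
  | .leaf, t :: ts => (t, ts)
  | .node l r, ts =>
      ((BinTree.node (l.graftAux ts).1 ((r.graftAux (l.graftAux ts).2)).1),
        (r.graftAux (l.graftAux ts).2).2)

/-- Graft the trees of `ts` onto the leaves of `t`, in left-to-right order. -/
def BinTree.graft (t : BinTree) (ts : List BinTree) : BinTree := (t.graftAux ts).1

/-- `σ` is a subtree of `ρ` (sharing the same root) iff `ρ` is obtained from `σ`
by grafting trees onto its leaves. -/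
def BinTree.IsSubtree (σ ρ : BinTree) : Prop :=
  ∃ ts : List BinTree, ts.length = σ.leaves ∧ ρ = σ.graft ts

/-- `ω_i`: attach the two-leafed tree Y to the `i`-th leaf (0-indexed) of a tree. -/
def BinTree.expand : BinTree → ℕ → BinTree
  | .leaf, _ => .node .leaf .leaf
  | .node l r, i =>
      if i < l.leaves then .node (l.expand i) r else .node l (r.expand (i - l.leaves))

def listGraft : List BinTree → List BinTree → List BinTree
  | [], _ => []
  | t :: ts, fs => (t.graftAux fs).1 :: listGraft ts (t.graftAux fs).2

open CategoryTheory MonoidalCategory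

variable {C : Type*} [Category C] [MonoidalCategory C]

/-- The tensor power of `M` shaped by a binary tree (one factor `M` per leaf). -/
def treePow (M : C) : BinTree → C
  | .leaf => M
  | .node l r => treePow M l ⊗ treePow M r

/-- The tensor power of `M` shaped by a forest: `M^{⊗n}` where `n` is the total number
of leaves, bracketed tree-by-tree. -/
def forestPow (M : C) : List BinTree → C
  | [] => 𝟙_ C
  | t :: ts => treePow M t ⊗ forestPow M ts

/-- `μ_τ : M^{⊗n} ≅ M` for an `n`-leafed tree `τ`. -/
def muTree (M : C) (μ : M ⊗ M ≅ M) : (τ : BinTree) → (treePow M τ ≅ M)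
  | .leaf => Iso.refl M
  | .node l r => (tensorIso (muTree M μ l) (muTree M μ r)) ≪≫ μ

/-- `μ_T = μ_{τ₁} ⊗ ... ⊗ μ_{τ_k} : M^{⊗n} ≅ M^{⊗k}` for a forest `T` with `n` leaves
and `k` roots. -/
def muForest (M : C) (μ : M ⊗ M ≅ M) :
    (T : List BinTree) → (forestPow M T ≅ forestPow M (List.replicate T.length .leaf))
  | [] => Iso.refl _
  | t :: ts => tensorIso (muTree M μ t) (muForest M μ ts)

/-- The morphism `μ_S` reshaped along a tree `t`: applying `μ` on each grafted piece of
`t.graft ts` yields a map `M^{⊗(leaves of graft)} ⟶ M^{⊗(leaves of t)}`, tree-shaped. -/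
def muAlong (M : C) (μ : M ⊗ M ≅ M) :
    (t : BinTree) → (ts : List BinTree) → (treePow M (t.graft ts) ⟶ treePow M t)
  | .leaf, [] => 𝟙 M
  | .leaf, s :: _ => (muTree M μ s).hom
  | .node l r, ts => (muAlong M μ l ts) ⊗ₘ (muAlong M μ r (l.graftAux ts).2)

/-- The morphism `μ_S` reshaped along a forest `T`. -/
def muForestAlong (M : C) (μ : M ⊗ M ≅ M) :
    (T : List BinTree) → (S : List BinTree) → (forestPow M (listGraft T S) ⟶ forestPow M T)
  | [], _ => 𝟙 (𝟙_ C)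
  | t :: ts, fs => (muAlong M μ t fs) ⊗ₘ (muForestAlong M μ ts (t.graftAux fs).2)

theorem listGraft_length (T S : List BinTree) : (listGraft T S).length = T.length := by
  induction T generalizing S with
  | nil => rfl
  | cons t ts ih => simp [listGraft, ih]

/-! Grafting trees onto the leaves of `t` and then collapsing everything with `μ` is the same as
first collapsing each grafted tree and then collapsing along `t`: this is bifunctoriality of `⊗`,
applied by induction on `t`. Forests are handled tree by tree, and a forest of trivial trees is
collapsed by identities. -/

theorem muTree_node_hom (M : C) (μ : M ⊗ M ≅ M) (l r : BinTree) :
    (muTree M μ (.node l r)).hom = ((muTree M μ l).hom ⊗ₘ (muTree M μ r).hom) ≫ μ.hom :=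
  rfl

theorem muForest_cons_hom (M : C) (μ : M ⊗ M ≅ M) (t : BinTree) (ts : List BinTree) :
    (muForest M μ (t :: ts)).hom = (muTree M μ t).hom ⊗ₘ (muForest M μ ts).hom :=
  rfl

theorem tensorHom_comp_eqToHom {X Y Z W W' : C} (f : X ⟶ Y) (g : Z ⟶ W) (h : W = W') :
    f ⊗ₘ (g ≫ eqToHom h) = (f ⊗ₘ g) ≫ eqToHom (congrArg (Y ⊗ ·) h) := by
  subst h
  simp

theorem muTree_graft (M : C) (μ : M ⊗ M ≅ M) : ∀ (t : BinTree) (ts : List BinTree),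
    (muTree M μ (t.graft ts)).hom = muAlong M μ t ts ≫ (muTree M μ t).hom
  | .leaf, [] => (Category.id_comp _).symm
  | .leaf, _ :: _ => (Category.comp_id _).symm
  | .node l r, ts => by
      change (muTree M μ (.node (l.graft ts) (r.graft (l.graftAux ts).2))).hom = _
      rw [muTree_node_hom, muTree_node_hom, muTree_graft M μ l, muTree_graft M μ r]
      exact (tensorHom_comp_tensorHom_assoc _ _ _ _ _).symm

theorem muForest_graft (M : C) (μ : M ⊗ M ≅ M) : ∀ (T S : List BinTree),
    (muForest M μ (listGraft T S)).hom =
      muForestAlong M μ T S ≫ (muForest M μ T).hom ≫ eqToHom (by rw [listGraft_length])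
  | [], _ => show 𝟙 (𝟙_ C) = 𝟙 _ ≫ 𝟙 _ ≫ 𝟙 _ by simp
  | t :: ts, S => by
      change (muForest M μ (t.graft S :: listGraft ts (t.graftAux S).2)).hom = _
      rw [muForest_cons_hom, muForest_cons_hom, muTree_graft, muForest_graft M μ ts,
        ← Category.assoc (muForestAlong M μ ts _), tensorHom_comp_eqToHom]
      exact (tensorHom_comp_tensorHom_assoc _ _ _ _ _).symm

theorem muForest_replicate_leaf (M : C) (μ : M ⊗ M ≅ M) : ∀ k : ℕ,
    (muForest M μ (List.replicate k .leaf)).hom = eqToHom (by rw [List.length_replicate])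
  | 0 => rfl
  | k + 1 => by
      change (muForest M μ (.leaf :: List.replicate k .leaf)).hom = _
      rw [muForest_cons_hom, muForest_replicate_leaf M μ k]
      exact (id_tensorHom _ _).trans (whiskerLeft_eqToHom _ _)

/-- Functoriality of `T ↦ μ_T`: the map attached to a grafting composite of forests is
the composite of the attached maps, and the map attached to an identity forest (a forest
of trivial trees) is the identity. -/
theorem muForest_functorial (M : C) (μ : M ⊗ M ≅ M) :
    (∀ (T S : List BinTree), (S.length = (T.map BinTree.leaves).sum) →
      (muForest M μ (listGraft T S)).hom =
        muForestAlong M μ T S ≫ (muForest M μ T).hom ≫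
          eqToHom (by rw [listGraft_length])) ∧
    (∀ k : ℕ, (muForest M μ (List.replicate k .leaf)).hom =
      eqToHom (by rw [List.length_replicate])) :=
  ⟨fun T S _ => muForest_graft M μ T S, muForest_replicate_leaf M μ⟩
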